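/- Let H be a Tonelli Hamiltonian on ℝⁿ × ℝⁿ with associated Tonelli Lagrangian L, λ > 0, and let Φᵗ be a complete flow of the λ-discounted Hamiltonian vector field. Let μ be a Borel probability measure on ℝⁿ × ℝⁿ with compact support which is invariant under Φᵗ (i.e. Φᵗ_*μ = μ for all t). Then ∫ ( L(x, ∂H/∂p(x,p)) + H(x,p) ) dμ(x,p) = 0; equivalently (by the Legendre–Fenchel equality), ∫ ⟨p, ∂H/∂p(x,p)⟩ dμ(x,p) = 0. -/

import Mathlib

/-!
Along the discounted flow the energy decays at the rate `d/dt H(Φᵗ z) = -λ ⟨p, ∂H/∂p⟩`, since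
the conservative part of the vector field is tangent to the level sets of `H`. For an invariant
measure `t ↦ ∫ H ∘ Φᵗ dμ` is constant; compactness of the support (which is invariant as well)
justifies differentiating under the integral sign, so `λ ∫ ⟨p, ∂H/∂p⟩ dμ = 0`. Fiberwise
convexity of `H` turns the Fenchel inequality into an equality at `v = ∂H/∂p(x, p)`, which gives
the other identity.
-/

open Set Filter MeasureTheory Real

noncomputable section

abbrev E (n : ℕ) : Type := EuclideanSpace ℝ (Fin n)

noncomputable def Hp {n : ℕ} (H : E n × E n → ℝ) (x p : E n) : E n :=
  gradient (fun q => H (x, q)) p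

noncomputable def Hx {n : ℕ} (H : E n × E n → ℝ) (x p : E n) : E n :=
  gradient (fun y => H (y, p)) x

noncomputable def Lv {n : ℕ} (L : E n × E n → ℝ) (x v : E n) : E n :=
  gradient (fun w => L (x, w)) v

noncomputable def Lx {n : ℕ} (L : E n × E n → ℝ) (x v : E n) : E n :=
  gradient (fun y => L (y, v)) x

/-- A Tonelli Hamiltonian. -/
def Tonelli {n : ℕ} (H : E n × E n → ℝ) : Prop :=
  ContDiff ℝ 2 H ∧
  (∀ x p v : E n, v ≠ 0 → 0 < (inner ℝ (fderiv ℝ (fun q => Hp H x q) p v) v : ℝ)) ∧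
  (∀ A : ℝ, ∃ B : ℝ, 0 ≤ B ∧ ∀ x p : E n, A * ‖p‖ - B ≤ H (x, p))

/-- `L` is the Lagrangian associated to `H` by fiberwise Legendre-Fenchel transform. -/
def IsLagrangianOf {n : ℕ} (L H : E n × E n → ℝ) : Prop :=
  ∀ x v : E n, IsLUB {r : ℝ | ∃ p : E n, r = (inner ℝ p v : ℝ) - H (x, p)} (L (x, v))

/-- A continuous piecewise `C¹` curve on `[a,b]`, with derivative `γ'`. -/
def PiecewiseC1 {n : ℕ} (a b : ℝ) (γ γ' : ℝ → E n) : Prop :=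
  ContinuousOn γ (Set.Icc a b) ∧
  ∃ s : Finset ℝ,
    (∀ t ∈ Set.Icc a b, t ∉ s → HasDerivAt γ (γ' t) t) ∧
    ContinuousOn γ' (Set.Icc a b \ s) ∧
    ∃ C : ℝ, ∀ t ∈ Set.Icc a b, ‖γ' t‖ ≤ C

/-- `u` is λ-dominated by `L`. -/
def Dominated {n : ℕ} (lam : ℝ) (L : E n × E n → ℝ) (u : E n → ℝ) : Prop :=
  ∀ a b : ℝ, a < b → ∀ γ γ' : ℝ → E n, PiecewiseC1 a b γ γ' →
    Real.exp (lam * b) * u (γ b) - Real.exp (lam * a) * u (γ a) ≤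
      ∫ t in a..b, Real.exp (lam * t) * L (γ t, γ' t)

/-- `γ` is `(u,L)`-λ-calibrated on `[a,b]`. -/
def Calibrated {n : ℕ} (lam : ℝ) (L : E n × E n → ℝ) (u : E n → ℝ)
    (a b : ℝ) (γ γ' : ℝ → E n) : Prop :=
  Real.exp (lam * b) * u (γ b) - Real.exp (lam * a) * u (γ a) =
    ∫ t in a..b, Real.exp (lam * t) * L (γ t, γ' t)

def intVec {n : ℕ} (k : Fin n → ℤ) : E n :=
  (EuclideanSpace.equiv (Fin n) ℝ).symm (fun i => (k i : ℝ))


/-- A complete flow of the λ-discounted Hamiltonian vector field of `H`. -/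
def IsDiscountedFlow {n : ℕ} (lam : ℝ) (H : E n × E n → ℝ)
    (Φ : ℝ → E n × E n → E n × E n) : Prop :=
  Φ 0 = id ∧ (∀ t s : ℝ, ∀ z : E n × E n, Φ (t + s) z = Φ t (Φ s z)) ∧
  ∀ (z : E n × E n) (t : ℝ),
    HasDerivAt (fun s => (Φ s z).1) (Hp H (Φ t z).1 (Φ t z).2) t ∧
    HasDerivAt (fun s => (Φ s z).2) (-Hx H (Φ t z).1 (Φ t z).2 - lam • (Φ t z).2) t

open scoped RealInnerProductSpace Gradient

section Convexity

variable {F : Type*} [NormedAddCommGroup F] [InnerProductSpace ℝ F]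

theorem add_eq_inner_of_isLUB_of_forall_le {f : F → ℝ} {p g : F} {ℓ : ℝ}
    (htangent : ∀ q, f p + ⟪g, q - p⟫ ≤ f q)
    (hℓ : IsLUB {r | ∃ q, r = ⟪q, g⟫ - f q} ℓ) :
    ℓ + f p = ⟪p, g⟫ := by
  have hmax : IsGreatest {r | ∃ q, r = ⟪q, g⟫ - f q} (⟪p, g⟫ - f p) := by
    refine ⟨⟨p, rfl⟩, ?_⟩
    rintro r ⟨q, rfl⟩
    have := htangent q
    rw [inner_sub_right] at this
    rw [real_inner_comm g q, real_inner_comm g p]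
    linarith
  linarith [hℓ.unique hmax.isLUB]

variable [CompleteSpace F]

theorem ContDiff.differentiable_gradient {f : F → ℝ} (hf : ContDiff ℝ 2 f) :
    Differentiable ℝ (∇ f) := by
  have h : ∇ f = (InnerProductSpace.toDual ℝ F).symm ∘ fderiv ℝ f := rfl
  rw [h]
  exact (InnerProductSpace.toDual ℝ F).symm.differentiable.comp
    ((hf.fderiv_right (by norm_num)).differentiable one_ne_zero)

theorem add_inner_gradient_sub_le_of_inner_fderiv_gradient_nonneg {f : F → ℝ}
    (hf : Differentiable ℝ f) (hf' : Differentiable ℝ (∇ f))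
    (hpos : ∀ p v, 0 ≤ ⟪fderiv ℝ (∇ f) p v, v⟫) (p q : F) :
    f p + ⟪∇ f p, q - p⟫ ≤ f q := by
  set v := q - p
  set c : ℝ → F := fun t => p + t • v
  have hc : ∀ t, HasDerivAt c v t := fun t => by
    simpa only [one_smul] using ((hasDerivAt_id' t).smul_const v).const_add p
  set ψ : ℝ → ℝ := fun t => ⟪∇ f (c t), v⟫
  have hfc : ∀ t, HasDerivAt (fun t => f (c t)) (ψ t) t := fun t => by
    have h := (hf (c t)).hasFDerivAt.comp_hasDerivAt t (hc t)
    rwa [← inner_gradient_left] at h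
  have hψ : ∀ t, HasDerivAt ψ ⟪fderiv ℝ (∇ f) (c t) v, v⟫ t := fun t => by
    have h := ((hf' (c t)).hasFDerivAt.comp_hasDerivAt t (hc t)).inner ℝ (hasDerivAt_const t v)
    rwa [inner_zero_right, zero_add] at h
  have hψ_mono : Monotone ψ :=
    monotone_of_deriv_nonneg (fun t => (hψ t).differentiableAt)
      fun t => (hψ t).deriv ▸ hpos (c t) v
  obtain ⟨d, hd, hslope⟩ := exists_hasDerivAt_eq_slope (fun t => f (c t)) ψ one_pos
    (fun t _ => (hfc t).continuousAt.continuousWithinAt) fun t _ => hfc t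
  have hψ0 : ψ 0 ≤ ψ d := hψ_mono hd.1.le
  simp only [c, v, ψ, zero_smul, add_zero, one_smul, add_sub_cancel, sub_zero, div_one]
    at hslope hψ0
  linarith

end Convexity

section Tonelli

variable {n : ℕ} {H : E n × E n → ℝ}

theorem Tonelli.add_inner_Hp_sub_le (hH : Tonelli H) (x p q : E n) :
    H (x, p) + ⟪Hp H x p, q - p⟫ ≤ H (x, q) := by
  have hfib : ContDiff ℝ 2 fun q : E n => H (x, q) :=
    hH.1.comp (contDiff_const.prodMk contDiff_id)
  refine add_inner_gradient_sub_le_of_inner_fderiv_gradient_nonneg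
    (hfib.differentiable two_ne_zero) hfib.differentiable_gradient (fun p v => ?_) p q
  rcases eq_or_ne v 0 with rfl | hv
  · simp
  · exact (hH.2.1 x p v hv).le

theorem Tonelli.lagrangian_add_eq_inner {L : E n × E n → ℝ} (hH : Tonelli H)
    (hLH : IsLagrangianOf L H) (x p : E n) :
    L (x, Hp H x p) + H (x, p) = ⟪p, Hp H x p⟫ :=
  add_eq_inner_of_isLUB_of_forall_le (hH.add_inner_Hp_sub_le x p) (hLH x _)

theorem fderiv_apply_eq_inner_Hx_add_inner_Hp {w : E n × E n} (hH : DifferentiableAt ℝ H w)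
    (a b : E n) :
    fderiv ℝ H w (a, b) = ⟪Hx H w.1 w.2, a⟫ + ⟪Hp H w.1 w.2, b⟫ := by
  have hx : HasFDerivAt (fun y => H (y, w.2)) ((fderiv ℝ H w).comp (.inl ℝ (E n) (E n))) w.1 :=
    hH.hasFDerivAt.comp w.1 (hasFDerivAt_prodMk_left w.1 w.2)
  have hp : HasFDerivAt (fun q => H (w.1, q)) ((fderiv ℝ H w).comp (.inr ℝ (E n) (E n))) w.2 :=
    hH.hasFDerivAt.comp w.2 (hasFDerivAt_prodMk_right w.1 w.2)
  rw [Hx, Hp, inner_gradient_left, inner_gradient_left, hx.fderiv, hp.fderiv]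
  simp [← map_add]

theorem continuous_Hp (hH : ContDiff ℝ 1 H) : Continuous fun z : E n × E n => Hp H z.1 z.2 := by
  have h : (fun z : E n × E n => Hp H z.1 z.2) = fun z =>
      (InnerProductSpace.toDual ℝ (E n)).symm
        ((fderiv ℝ H z).comp (ContinuousLinearMap.inr ℝ (E n) (E n))) := by
    funext z
    have hp : HasFDerivAt (fun q => H (z.1, q))
        ((fderiv ℝ H z).comp (.inr ℝ (E n) (E n))) z.2 :=
      (hH.differentiable one_ne_zero z).hasFDerivAt.comp z.2 (hasFDerivAt_prodMk_right z.1 z.2)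
    rw [Hp, gradient, hp.fderiv]
  rw [h]
  exact (InnerProductSpace.toDual ℝ (E n)).symm.continuous.comp
    (((ContinuousLinearMap.compL ℝ (E n) (E n × E n) ℝ).flip
      (ContinuousLinearMap.inr ℝ (E n) (E n))).continuous.comp (hH.continuous_fderiv one_ne_zero))

theorem IsDiscountedFlow.hasDerivAt_hamiltonian {lam : ℝ} {Φ : ℝ → E n × E n → E n × E n}
    (hΦ : IsDiscountedFlow lam H Φ) (hH : Differentiable ℝ H) (z : E n × E n) (t : ℝ) :
    HasDerivAt (fun s => H (Φ s z)) (-(lam * ⟪(Φ t z).2, Hp H (Φ t z).1 (Φ t z).2⟫)) t := by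
  obtain ⟨hx, hp⟩ := hΦ.2.2 z t
  set w := Φ t z
  have h := (hH w).hasFDerivAt.comp_hasDerivAt t (hx.prodMk hp)
  have hrate : ⟪Hx H w.1 w.2, Hp H w.1 w.2⟫ + ⟪Hp H w.1 w.2, -Hx H w.1 w.2 - lam • w.2⟫ =
      -(lam * ⟪w.2, Hp H w.1 w.2⟫) := by
    rw [inner_sub_right, inner_neg_right, real_inner_smul_right, real_inner_comm w.2,
      real_inner_comm (Hx H w.1 w.2)]
    ring
  rwa [fderiv_apply_eq_inner_Hx_add_inner_Hp (hH w), hrate] at h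

theorem IsDiscountedFlow.continuous_orbit {lam : ℝ} {Φ : ℝ → E n × E n → E n × E n}
    (hΦ : IsDiscountedFlow lam H Φ) (z : E n × E n) : Continuous fun t => Φ t z :=
  continuous_iff_continuousAt.2 fun t =>
    ((hΦ.2.2 z t).1.continuousAt).prodMk (hΦ.2.2 z t).2.continuousAt

end Tonelli

section InvariantMeasure

variable {X : Type*} [MeasurableSpace X] {μ : Measure X}

-- `Measure.map` sends a map that is not AE-measurable to the junk value `0`.
theorem aemeasurable_of_map_eq_self {f : X → X} (hf : μ.map f = μ) : AEMeasurable f μ := by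
  by_contra h
  rcases eq_or_ne μ 0 with rfl | hμ
  · exact h aemeasurable_zero_measure
  · exact hμ (hf ▸ Measure.map_of_not_aemeasurable h)

variable [TopologicalSpace X] [OpensMeasurableSpace X] {Φ : ℝ → X → X}

theorem ae_forall_mem_of_map_eq_self (hinv : ∀ t, μ.map (Φ t) = μ)
    (horbit : ∀ z, Continuous fun t => Φ t z) {K : Set X} (hK : IsClosed K) (hKμ : μ Kᶜ = 0) :
    ∀ᵐ z ∂μ, ∀ t, Φ t z ∈ K := by
  have hrat : ∀ᵐ z ∂μ, ∀ q : ℚ, Φ q z ∈ K := by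
    refine ae_all_iff.2 fun q => mem_ae_iff.2 ?_
    change μ (Φ q ⁻¹' Kᶜ) = 0
    rw [← Measure.map_apply_of_aemeasurable
      (aemeasurable_of_map_eq_self (hinv q)) hK.measurableSet.compl, hinv]
    exact hKμ
  filter_upwards [hrat] with z hz t
  have hclosed : IsClosed ((fun t => Φ t z) ⁻¹' K) := hK.preimage (horbit z)
  have hdense : closure (range ((↑) : ℚ → ℝ)) ⊆ (fun t => Φ t z) ⁻¹' K :=
    hclosed.closure_subset_iff.2 (range_subset_iff.2 hz)
  have hrat_dense : closure (range ((↑) : ℚ → ℝ)) = univ := Rat.denseRange_cast.closure_range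
  exact hdense (hrat_dense ▸ mem_univ t)

theorem integral_eq_zero_of_hasDerivAt_comp_flow [T2Space X] [IsFiniteMeasure μ]
    (hinv : ∀ t, μ.map (Φ t) = μ) (horbit : ∀ z, Continuous fun t => Φ t z)
    {K : Set X} (hK : IsCompact K) (hKμ : μ Kᶜ = 0) {f g : X → ℝ} (hf : Continuous f)
    (hg : Continuous g) (hfg : ∀ z t, HasDerivAt (fun s => f (Φ s z)) (g (Φ t z)) t) :
    ∫ z, g z ∂μ = 0 := by
  have hmeas : ∀ t, AEMeasurable (Φ t) μ := fun t => aemeasurable_of_map_eq_self (hinv t)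
  have hcomp : ∀ {h : X → ℝ}, Continuous h → ∀ t, ∫ z, h (Φ t z) ∂μ = ∫ z, h z ∂μ :=
    fun hh t => by rw [← integral_map (hmeas t) hh.aestronglyMeasurable, hinv]
  obtain ⟨Cf, hCf⟩ := hK.exists_bound_of_continuousOn hf.continuousOn
  obtain ⟨Cg, hCg⟩ := hK.exists_bound_of_continuousOn hg.continuousOn
  have hK_ae : ∀ᵐ z ∂μ, ∀ t, Φ t z ∈ K :=
    ae_forall_mem_of_map_eq_self hinv horbit hK.isClosed hKμ
  have hf_int : Integrable (fun z => f (Φ 0 z)) μ :=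
    (integrable_const Cf).mono' ((hf.measurable.comp_aemeasurable (hmeas 0)).aestronglyMeasurable)
      (hK_ae.mono fun z hz => hCf _ (hz 0))
  obtain ⟨-, hderiv⟩ := hasDerivAt_integral_of_dominated_loc_of_deriv_le (x₀ := (0 : ℝ))
    univ_mem (Eventually.of_forall fun t =>
      (hf.measurable.comp_aemeasurable (hmeas t)).aestronglyMeasurable)
    hf_int ((hg.measurable.comp_aemeasurable (hmeas 0)).aestronglyMeasurable)
    (hK_ae.mono fun z hz t _ => hCg _ (hz t)) (integrable_const Cg)
    (Eventually.of_forall fun z t _ => hfg z t)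
  simp only [Function.comp_apply, hcomp hf, hcomp hg] at hderiv
  exact hderiv.unique (hasDerivAt_const (0 : ℝ) _)

end InvariantMeasure

theorem stmt_15_general {n : ℕ} (lam : ℝ) (hlam : 0 < lam)
    (H L : E n × E n → ℝ) (hH : Tonelli H) (hLH : IsLagrangianOf L H)
    (Φ : ℝ → E n × E n → E n × E n) (hΦ : IsDiscountedFlow lam H Φ)
    (μ : Measure (E n × E n)) (hprob : IsProbabilityMeasure μ)
    (hcpt : ∃ K : Set (E n × E n), IsCompact K ∧ μ Kᶜ = 0)
    (hinv : ∀ t : ℝ, Measure.map (Φ t) μ = μ) :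
    (∫ z, (L (z.1, Hp H z.1 z.2) + H z) ∂μ) = 0 ∧
    (∫ z, (inner ℝ z.2 (Hp H z.1 z.2) : ℝ) ∂μ) = 0 := by
  obtain ⟨K, hK, hKμ⟩ := hcpt
  have hdissipation : ∫ z, -(lam * ⟪z.2, Hp H z.1 z.2⟫) ∂μ = 0 :=
    integral_eq_zero_of_hasDerivAt_comp_flow hinv hΦ.continuous_orbit hK hKμ
      hH.1.continuous
      ((continuous_snd.inner (continuous_Hp (hH.1.of_le one_le_two))).const_mul lam).neg
      (hΦ.hasDerivAt_hamiltonian (hH.1.differentiable two_ne_zero))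
  have hmomentum : ∫ z, ⟪z.2, Hp H z.1 z.2⟫ ∂μ = 0 := by
    rw [integral_neg, integral_const_mul, neg_eq_zero] at hdissipation
    exact (mul_eq_zero.1 hdissipation).resolve_left hlam.ne'
  refine ⟨?_, hmomentum⟩
  simpa only [hH.lagrangian_add_eq_inner hLH] using hmomentum

/-- For any compactly supported invariant probability measure `μ` of the
λ-discounted flow, `∫ (L(x,∂H/∂p(x,p)) + H(x,p)) dμ = 0`, equivalently
`∫ ⟨p, ∂H/∂p(x,p)⟩ dμ = 0`. -/
theorem stmt_15 {n : ℕ} (hn : 1 ≤ n) (lam : ℝ) (hlam : 0 < lam)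
    (H L : E n × E n → ℝ) (hH : Tonelli H) (hLH : IsLagrangianOf L H)
    (Φ : ℝ → E n × E n → E n × E n) (hΦ : IsDiscountedFlow lam H Φ)
    (μ : Measure (E n × E n)) (hprob : IsProbabilityMeasure μ)
    (hcpt : ∃ K : Set (E n × E n), IsCompact K ∧ μ Kᶜ = 0)
    (hinv : ∀ t : ℝ, Measure.map (Φ t) μ = μ) :
    (∫ z, (L (z.1, Hp H z.1 z.2) + H z) ∂μ) = 0 ∧
    (∫ z, (inner ℝ z.2 (Hp H z.1 z.2) : ℝ) ∂μ) = 0 :=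
  stmt_15_general lam hlam H L hH hLH Φ hΦ μ hprob hcpt hinv

end
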